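/- Let m ≥ 3 and let U ⊆ ℂ be open, connected, with 0 ∈ U. Suppose f : U → Mat(2×(2m−4), ℂ) and g : U → Mat(2×2, ℂ) are complex-differentiable on U with f(0) = 0, g(0) = 0, and g′ = −f·(f′)^♯. For λ ∈ ℂ \ {0} let H_λ := I_{2m} + λ⁻¹H₁ + λ⁻²H₂, where with respect to the block splitting 2m = 2 + (2m−4) + 2, H₁ = ((0, f, 0), (0, 0, −f^♯), (0, 0, 0)) and H₂ = ((0, 0, g), (0, 0, 0), (0, 0, 0)). Then for every λ ≠ 0 and every z ∈ U, H_λ(z)ᵗ J_{2m} H_λ(z) = J_{2m}. -/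

import Mathlib

/-! Write `μ = λ⁻¹`, so `H_λ = 1 + μ H₁ + μ² H₂`. Then `H_λᵗ J H_λ - J` is a polynomial in `μ`
whose coefficients are `H₁ᵗJ + JH₁`, `H₁ᵗJH₁ + JH₂ + H₂ᵗJ`, `H₁ᵗJH₂ + H₂ᵗJH₁` and `H₂ᵗJH₂`.
The block shapes of `H₁`, `H₂` make all of them vanish except the `μ²` one, whose only nonzero
block is the bottom-right corner `J₂ (g + g^♯ + f f^♯)`. Finally `g + g^♯ + f f^♯` vanishes at `0`
and has derivative `-f (f′)^♯ - f′ f^♯ + f′ f^♯ + f (f′)^♯ = 0`, since `(X Y^♯)^♯ = Y X^♯`;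
so it vanishes on the connected set `U`. -/

open Matrix

noncomputable section

/-- `J_k`: the k×k matrix with ones on the antidiagonal. -/
def Jmat (k : ℕ) : Matrix (Fin k) (Fin k) ℂ :=
  fun i j => if (i : ℕ) + (j : ℕ) = k - 1 then 1 else 0

/-- `X^♯ = J_k Xᵗ J₂` for a 2×k matrix `X`. -/
def sharp (k : ℕ) (X : Matrix (Fin 2) (Fin k) ℂ) : Matrix (Fin k) (Fin 2) ℂ :=
  Jmat k * Xᵀ * Jmat 2

/-- The 2m×2m matrix `((0, f, 0), (0, 0, −f^♯), (0, 0, 0))` w.r.t. the splitting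
`2m = 2 + (2m−4) + 2`. -/
def triMat (m : ℕ) (f : Matrix (Fin 2) (Fin (2 * m - 4)) ℂ) :
    Matrix (Fin (2 * m)) (Fin (2 * m)) ℂ := fun i j =>
  if hi : (i : ℕ) < 2 then
    if hj1 : (j : ℕ) < 2 then 0
    else if hj : (j : ℕ) < 2 * m - 2 then
      f ⟨(i : ℕ), hi⟩ ⟨(j : ℕ) - 2, by have := j.isLt; omega⟩
    else 0
  else if hi2 : (i : ℕ) < 2 * m - 2 then
    if hj : (j : ℕ) < 2 * m - 2 then 0
    else
      -(sharp (2 * m - 4) f ⟨(i : ℕ) - 2, by have := i.isLt; omega⟩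
          ⟨(j : ℕ) - (2 * m - 2), by have := j.isLt; omega⟩)
  else 0

/-- The 2m×2m matrix `((0, 0, g), (0, 0, 0), (0, 0, 0))` w.r.t. the splitting
`2m = 2 + (2m−4) + 2`. -/
def cornerMat (m : ℕ) (g : Matrix (Fin 2) (Fin 2) ℂ) :
    Matrix (Fin (2 * m)) (Fin (2 * m)) ℂ := fun i j =>
  if hi : (i : ℕ) < 2 then
    if hj : 2 * m - 2 ≤ (j : ℕ) then
      g ⟨(i : ℕ), hi⟩ ⟨(j : ℕ) - (2 * m - 2), by have := j.isLt; omega⟩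
    else 0
  else 0

lemma Jmat_apply (k : ℕ) (i j : Fin k) : Jmat k i j = if j = i.rev then 1 else 0 := by
  have := i.isLt
  simp only [Jmat, Fin.ext_iff, Fin.val_rev]
  exact if_congr (by omega) rfl rfl

lemma Jmat_mul_apply {k r : ℕ} (X : Matrix (Fin k) (Fin r) ℂ) (i : Fin k) (j : Fin r) :
    (Jmat k * X) i j = X i.rev j := by
  simp [Matrix.mul_apply, Jmat_apply]

lemma mul_Jmat_apply {k r : ℕ} (X : Matrix (Fin r) (Fin k) ℂ) (i : Fin r) (j : Fin k) :
    (X * Jmat k) i j = X i j.rev := by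
  simp [Matrix.mul_apply, Jmat_apply, ← Fin.rev_eq_iff]

lemma transpose_mul_Jmat_mul_apply {k r s : ℕ} (X : Matrix (Fin k) (Fin r) ℂ)
    (Y : Matrix (Fin k) (Fin s) ℂ) (i : Fin r) (j : Fin s) :
    (Xᵀ * Jmat k * Y) i j = ∑ l, X l.rev i * Y l j := by
  simp only [Matrix.mul_apply (M := Xᵀ * Jmat k), mul_Jmat_apply, Matrix.transpose_apply]

lemma sharp_apply {k : ℕ} (X : Matrix (Fin 2) (Fin k) ℂ) (p : Fin k) (q : Fin 2) :
    sharp k X p q = X q.rev p.rev := by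
  rw [sharp, mul_Jmat_apply, Jmat_mul_apply, Matrix.transpose_apply]

lemma sharp_neg {k : ℕ} (X : Matrix (Fin 2) (Fin k) ℂ) : sharp k (-X) = -sharp k X := by
  ext p q
  simp only [sharp_apply, Matrix.neg_apply]

lemma sharp_mul_sharp {k : ℕ} (X Y : Matrix (Fin 2) (Fin k) ℂ) :
    sharp 2 (X * sharp k Y) = Y * sharp k X := by
  ext p q
  simp only [sharp_apply, Matrix.mul_apply]
  exact Fintype.sum_equiv Fin.revPerm _ _ fun r => by simp [mul_comm]

lemma hasDerivAt_matrix_mul_apply {𝕜 : Type*} [NontriviallyNormedField 𝕜]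
    {l n p : Type*} [Fintype n] {F : 𝕜 → Matrix l n 𝕜} {G : 𝕜 → Matrix n p 𝕜}
    {F' : Matrix l n 𝕜} {G' : Matrix n p 𝕜} {z : 𝕜}
    (hF : ∀ i j, HasDerivAt (fun w => F w i j) (F' i j) z)
    (hG : ∀ i j, HasDerivAt (fun w => G w i j) (G' i j) z) (i : l) (j : p) :
    HasDerivAt (fun w => (F w * G w) i j) ((F' * G z + F z * G') i j) z := by
  simp only [Matrix.mul_apply, Matrix.add_apply, ← Finset.sum_add_distrib]
  exact HasDerivAt.fun_sum fun r _ => (hF i r).mul (hG r j)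

lemma add_sharp_add_mul_sharp_eq_zero {k : ℕ} {U : Set ℂ} (hU : IsOpen U)
    (hUconn : IsPreconnected U) (h0U : (0 : ℂ) ∈ U)
    {f f' : ℂ → Matrix (Fin 2) (Fin k) ℂ} {g : ℂ → Matrix (Fin 2) (Fin 2) ℂ}
    (hf0 : f 0 = 0) (hg0 : g 0 = 0)
    (hf : ∀ z ∈ U, ∀ i j, HasDerivAt (fun w => f w i j) (f' z i j) z)
    (hg : ∀ z ∈ U, ∀ i j,
      HasDerivAt (fun w => g w i j) ((-(f z * sharp k (f' z))) i j) z) {z : ℂ} (hz : z ∈ U) :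
    g z + sharp 2 (g z) + f z * sharp k (f z) = 0 := by
  ext a b
  set φ : ℂ → ℂ := fun w => (g w + sharp 2 (g w) + f w * sharp k (f w)) a b
  have hφ : ∀ w ∈ U, HasDerivAt φ 0 w := by
    intro w hw
    have hfs : ∀ i j, HasDerivAt (fun u => sharp k (f u) i j) (sharp k (f' w) i j) w := by
      simpa only [sharp_apply] using fun (i : Fin k) (j : Fin 2) => hf w hw j.rev i.rev
    have hgs := (hg w hw a b).fun_add (hg w hw b.rev a.rev)
    have hff := hasDerivAt_matrix_mul_apply (hf w hw) hfs a b
    have hderiv : -(f w * sharp k (f' w)) + sharp 2 (-(f w * sharp k (f' w)))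
        + (f' w * sharp k (f w) + f w * sharp k (f' w)) = 0 := by
      rw [sharp_neg, sharp_mul_sharp]
      abel
    have hderiv_ab := congrFun (congrFun hderiv a) b
    simp only [Matrix.add_apply, sharp_apply, Matrix.zero_apply] at hderiv_ab
    simpa only [φ, Matrix.add_apply, sharp_apply, hderiv_ab] using hgs.fun_add hff
  have hconst := hU.is_const_of_deriv_eq_zero hUconn
    (fun w hw => (hφ w hw).differentiableAt.differentiableWithinAt)
    (fun w hw => (hφ w hw).deriv) hz h0U
  simpa [φ, hf0, hg0, sharp] using hconst

lemma transpose_mul_Jmat_mul_eq_zero {k : ℕ} {X Y : Matrix (Fin k) (Fin k) ℂ}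
    (h : ∀ l i j, X l.rev i * Y l j = 0) : Xᵀ * Jmat k * Y = 0 := by
  ext i j
  simp only [transpose_mul_Jmat_mul_apply, h, Finset.sum_const_zero, Matrix.zero_apply]

section Blocks

variable {m : ℕ} (f : Matrix (Fin 2) (Fin (2 * m - 4)) ℂ) (g : Matrix (Fin 2) (Fin 2) ℂ)

lemma triMat_transpose_mul_Jmat_add_Jmat_mul_triMat_eq_zero :
    (triMat m f)ᵀ * Jmat (2 * m) + Jmat (2 * m) * triMat m f = 0 := by
  ext i j
  have hi := i.isLt
  have hj := j.isLt
  rw [Matrix.add_apply, mul_Jmat_apply, Jmat_mul_apply, Matrix.transpose_apply]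
  simp only [triMat, sharp_apply, Fin.val_rev, Matrix.zero_apply]
  split_ifs <;> first
    | omega
    | simp
    | (rw [add_neg_eq_zero]; congr 1 <;> ext <;> simp only [Fin.val_rev] <;> omega)
    | (rw [neg_add_eq_zero]; congr 1 <;> ext <;> simp only [Fin.val_rev] <;> omega)

lemma triMat_transpose_mul_Jmat_mul_cornerMat_eq_zero :
    (triMat m f)ᵀ * Jmat (2 * m) * cornerMat m g = 0 :=
  transpose_mul_Jmat_mul_eq_zero fun l i j => by
    have := l.isLt
    simp only [triMat, cornerMat, Fin.val_rev]
    split_ifs <;> first | omega | simp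

lemma cornerMat_transpose_mul_Jmat_mul_triMat_eq_zero :
    (cornerMat m g)ᵀ * Jmat (2 * m) * triMat m f = 0 :=
  transpose_mul_Jmat_mul_eq_zero fun l i j => by
    have := l.isLt
    simp only [triMat, cornerMat, Fin.val_rev]
    split_ifs <;> first | omega | simp

lemma cornerMat_transpose_mul_Jmat_mul_cornerMat_eq_zero (hm : 2 ≤ m) :
    (cornerMat m g)ᵀ * Jmat (2 * m) * cornerMat m g = 0 :=
  transpose_mul_Jmat_mul_eq_zero fun l i j => by
    have := l.isLt
    simp only [cornerMat, Fin.val_rev]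
    split_ifs <;> first | omega | simp

lemma triMat_transpose_mul_Jmat_mul_triMat_add_eq_zero (hm : 2 ≤ m)
    (hfg : g + sharp 2 g + f * sharp (2 * m - 4) f = 0) :
    (triMat m f)ᵀ * Jmat (2 * m) * triMat m f
      + (Jmat (2 * m) * cornerMat m g + (cornerMat m g)ᵀ * Jmat (2 * m)) = 0 := by
  ext i j
  have hi := i.isLt
  have hj := j.isLt
  rw [Matrix.add_apply, Matrix.add_apply, transpose_mul_Jmat_mul_apply, Jmat_mul_apply,
    mul_Jmat_apply, Matrix.transpose_apply, Matrix.zero_apply]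
  by_cases hcorner : 2 * m - 2 ≤ (i : ℕ) ∧ 2 * m - 2 ≤ (j : ℕ)
  · set a : Fin 2 := ⟨2 * m - (i + 1), by omega⟩
    set b : Fin 2 := ⟨j - (2 * m - 2), by omega⟩
    have hsum : ∑ l, triMat m f l.rev i * triMat m f l j = (f * sharp (2 * m - 4) f) a b := by
      rw [Matrix.mul_apply]
      refine (Fintype.sum_of_injective (fun p => ⟨p + 2, by omega⟩) ?_ _ _ ?_ ?_).symm
      · exact fun p q hpq => by simpa [Fin.ext_iff] using hpq
      · intro l hl
        have hl_mid : ¬(2 ≤ (l : ℕ) ∧ (l : ℕ) < 2 * m - 2) := fun h =>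
          hl ⟨⟨l - 2, by omega⟩, Fin.ext (by simp only; omega)⟩
        simp only [triMat, Fin.val_rev]
        split_ifs <;> first | omega | simp
      · intro p
        have := p.isLt
        simp only [triMat, sharp_apply, Fin.val_rev]
        split_ifs <;> first
          | omega
          | (rw [neg_mul_neg]; congr 2 <;> simp only [Fin.ext_iff, Fin.val_rev, a] <;> omega)
    have hC : cornerMat m g i.rev j = g a b := by
      simp only [cornerMat, Fin.val_rev]
      split_ifs <;> first | rfl | omega
    have hC' : cornerMat m g j.rev i = sharp 2 g a b := by
      simp only [cornerMat, Fin.val_rev, sharp_apply]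
      split_ifs <;> first
        | omega
        | (congr 1 <;> simp only [Fin.ext_iff, Fin.val_rev, a, b] <;> omega)
    have hfg_ab := congrFun (congrFun hfg a) b
    simp only [Matrix.add_apply, Matrix.zero_apply] at hfg_ab
    rw [hsum, hC, hC']
    linear_combination hfg_ab
  · have hsum : ∑ l, triMat m f l.rev i * triMat m f l j = 0 :=
      Finset.sum_eq_zero fun l _ => by
        have := l.isLt
        simp only [triMat, Fin.val_rev]
        split_ifs <;> first | omega | simp
    rw [hsum]
    simp only [cornerMat, Fin.val_rev]
    split_ifs <;> first | omega | simp

end Blocks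

lemma transpose_mul_mul_self_eq_of_coeffs_eq_zero {n R : Type*} [Fintype n] [DecidableEq n]
    [CommRing R] {J T C : Matrix n n R} (μ : R) (h₁ : Tᵀ * J + J * T = 0)
    (h₂ : Tᵀ * J * T + (J * C + Cᵀ * J) = 0) (h₃ : Tᵀ * J * C = 0) (h₃' : Cᵀ * J * T = 0)
    (h₄ : Cᵀ * J * C = 0) :
    (1 + μ • T + μ ^ 2 • C)ᵀ * J * (1 + μ • T + μ ^ 2 • C) = J := by
  have hexpand : (1 + μ • T + μ ^ 2 • C)ᵀ * J * (1 + μ • T + μ ^ 2 • C)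
      = J + μ • (Tᵀ * J + J * T) + μ ^ 2 • (Tᵀ * J * T + (J * C + Cᵀ * J))
        + μ ^ 3 • (Tᵀ * J * C + Cᵀ * J * T) + μ ^ 4 • (Cᵀ * J * C) := by
    simp only [Matrix.transpose_add, Matrix.transpose_smul, Matrix.transpose_one,
      Matrix.add_mul, Matrix.mul_add, Matrix.smul_mul, Matrix.mul_smul, Matrix.one_mul,
      Matrix.mul_one, smul_add, smul_smul, Matrix.mul_assoc]
    module
  rw [hexpand, h₁, h₂, h₃, h₃', h₄]
  simp

/-- with `f(0) = 0`, `g(0) = 0` and `g′ = −f·(f′)^♯` on the open connected set `U`,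
the loop `H_λ = I + λ⁻¹H₁ + λ⁻²H₂` satisfies `H_λᵗ J_{2m} H_λ = J_{2m}` for every `λ ≠ 0`. -/
theorem stmt8 (m : ℕ) (hm : 3 ≤ m) (U : Set ℂ) (hU : IsOpen U) (hUconn : IsConnected U)
    (h0U : (0 : ℂ) ∈ U)
    (f f' : ℂ → Matrix (Fin 2) (Fin (2 * m - 4)) ℂ)
    (g : ℂ → Matrix (Fin 2) (Fin 2) ℂ)
    (hf0 : f 0 = 0) (hg0 : g 0 = 0)
    (hf : ∀ z ∈ U, ∀ i j, HasDerivAt (fun w => f w i j) (f' z i j) z)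
    (hg : ∀ z ∈ U, ∀ i j,
      HasDerivAt (fun w => g w i j) ((-(f z * sharp (2 * m - 4) (f' z))) i j) z) :
    ∀ lam : ℂ, lam ≠ 0 → ∀ z ∈ U,
      ((1 : Matrix (Fin (2 * m)) (Fin (2 * m)) ℂ) + lam⁻¹ • triMat m (f z) +
          (lam ^ 2)⁻¹ • cornerMat m (g z))ᵀ * Jmat (2 * m) *
        ((1 : Matrix (Fin (2 * m)) (Fin (2 * m)) ℂ) + lam⁻¹ • triMat m (f z) +
          (lam ^ 2)⁻¹ • cornerMat m (g z)) = Jmat (2 * m) := by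
  intro lam _ z hz
  have hm2 : 2 ≤ m := by omega
  have hfg := add_sharp_add_mul_sharp_eq_zero hU hUconn.isPreconnected h0U hf0 hg0 hf hg hz
  rw [← inv_pow]
  exact transpose_mul_mul_self_eq_of_coeffs_eq_zero lam⁻¹
    (triMat_transpose_mul_Jmat_add_Jmat_mul_triMat_eq_zero (f z))
    (triMat_transpose_mul_Jmat_mul_triMat_add_eq_zero (f z) (g z) hm2 hfg)
    (triMat_transpose_mul_Jmat_mul_cornerMat_eq_zero (f z) (g z))
    (cornerMat_transpose_mul_Jmat_mul_triMat_eq_zero (f z) (g z))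
    (cornerMat_transpose_mul_Jmat_mul_cornerMat_eq_zero (g z) hm2)
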